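/- Let D be a nonempty convex open set in ℝ^d and let w : [0,∞) → ℝ^d be right-continuous with left limits with w(0) ∈ D̄. If (X, φ) and (X̃, φ̃) are both solutions of the Skorohod equation X = w + φ, then X(t) = X̃(t) and φ(t) = φ̃(t) for all t ≥ 0. -/

import Mathlib

/-!
Write `Y = X - X' = φ - φ'` for two solutions. Since `Y` has bounded variation and `Y(0) = 0`,
integration by parts gives `|Y(t)|² = 2 ∫_{(0,t]} ⟨Y, dY⟩ - ∑_{τ ≤ t} |ΔY(τ)|²`, hence
`|Y(t)|² ≤ -2 ∫ ⟨X' - X, dφ⟩ - 2 ∫ ⟨X - X', dφ'⟩`, and both integrals are nonnegative by the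
normal condition, tested with `η = X'` for `φ` and with `η = X` for `φ'`. These test functions are
only rcll, so the normal condition is first extended from continuous to rcll test functions.

In each coordinate, the integration by parts inequality is Fubini's theorem for the two finite
measures `p = dφᵢ⁺ + dφ'ᵢ⁻` and `q = dφᵢ⁻ + dφ'ᵢ⁺`, applied to the two half-planes `{v ≤ u}` and
`{u ≤ v}`, which overlap in the diagonal; the diagonal carries the squared jumps.
-/

open MeasureTheory Set Filter Topology
open scoped RealInnerProductSpace

noncomputable section

abbrev Euc (d : ℕ) := EuclideanSpace ℝ (Fin d)

/-- Measure data representing the Lebesgue–Stieltjes measures `dφ` (componentwise, as a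
difference of locally finite nonnegative measures) and `d|φ|` (the total variation measure)
of a function `φ : [0,∞) → ℝ^d` of locally bounded variation. -/
structure BVMeasureData (d : ℕ) (φ : ℝ → Euc d) where
  pos : Fin d → Measure ℝ
  neg : Fin d → Measure ℝ
  var : Measure ℝ
  pos_fin : ∀ i : Fin d, ∀ t : ℝ, pos i (Icc 0 t) < ⊤
  neg_fin : ∀ i : Fin d, ∀ t : ℝ, neg i (Icc 0 t) < ⊤
  increments : ∀ i : Fin d, ∀ s t : ℝ, 0 ≤ s → s ≤ t →
    (pos i (Ioc s t)).toReal - (neg i (Ioc s t)).toReal = φ t i - φ s i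
  var_eq : ∀ s t : ℝ, 0 ≤ s → s ≤ t → var (Ioc s t) = eVariationOn φ (Icc s t)

/-- The Stieltjes integral `∫_{(s,t]} ⟨f(τ), dφ(τ)⟩`. -/
def BVMeasureData.pairing {d : ℕ} {φ : ℝ → Euc d} (M : BVMeasureData d φ)
    (f : ℝ → Euc d) (s t : ℝ) : ℝ :=
  ∑ i : Fin d, ((∫ τ in Ioc s t, f τ i ∂(M.pos i)) - ∫ τ in Ioc s t, f τ i ∂(M.neg i))

/-- `f` is right-continuous at every `t ≥ 0`. -/
def RightContinuousOnNonneg {E : Type*} [TopologicalSpace E] (f : ℝ → E) : Prop :=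
  ∀ t : ℝ, 0 ≤ t → ContinuousWithinAt f (Ici t) t

/-- `f` has left limits at every `t > 0`. -/
def HasLeftLimitsOnPos {E : Type*} [TopologicalSpace E] (f : ℝ → E) : Prop :=
  ∀ t : ℝ, 0 < t → ∃ L, Tendsto f (𝓝[<] t) (𝓝 L)

/-- `φ` is associated with `X` (relative to the convex domain `D`):
`φ` is rcll of locally bounded variation with `φ(0) = 0`, the measure `d|φ|` does not
charge `{t ≥ 0 : X(t) ∈ D}`, and `∫_{(s,t]} ⟨η(τ) − X(τ), dφ(τ)⟩ ≥ 0` for every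
continuous `η : [0,∞) → closure D`. -/
structure IsAssociated {d : ℕ} (D : Set (Euc d)) (X : ℝ → Euc d) (φ : ℝ → Euc d)
    (M : BVMeasureData d φ) : Prop where
  rightCont : RightContinuousOnNonneg φ
  leftLim : HasLeftLimitsOnPos φ
  bv : ∀ t : ℝ, 0 ≤ t → eVariationOn φ (Icc 0 t) < ⊤
  init : φ 0 = 0
  carried : M.var {t : ℝ | 0 ≤ t ∧ X t ∈ D} = 0
  normal : ∀ η : ℝ → Euc d, Continuous η → (∀ t : ℝ, 0 ≤ t → η t ∈ closure D) →
    ∀ s t : ℝ, 0 ≤ s → s ≤ t → 0 ≤ M.pairing (fun τ => η τ - X τ) s t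

/-- `(X, φ)` (with measure data `M` for `φ`) solves the Skorohod equation `X = w + φ`
for the domain `D`. -/
structure IsSkorohodSolution {d : ℕ} (D : Set (Euc d)) (w X φ : ℝ → Euc d)
    (M : BVMeasureData d φ) : Prop where
  rightCont : RightContinuousOnNonneg X
  leftLim : HasLeftLimitsOnPos X
  mem : ∀ t : ℝ, 0 ≤ t → X t ∈ closure D
  eqn : ∀ t : ℝ, 0 ≤ t → X t = w t + φ t
  assoc : IsAssociated D X φ M

section CeilStep

def ceilStep (s h τ : ℝ) : ℝ := s + ⌈(τ - s) / h⌉ * h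

variable {s h : ℝ}

lemma measurable_ceilStep : Measurable (ceilStep s h) := by
  unfold ceilStep
  fun_prop

lemma countable_range_ceilStep : (range (ceilStep s h)).Countable :=
  (countable_range fun k : ℤ => s + k * h).mono <| by
    rintro _ ⟨τ, rfl⟩
    exact ⟨_, rfl⟩

variable (hh : 0 < h)
include hh

lemma le_ceilStep (τ : ℝ) : τ ≤ ceilStep s h τ := by
  have := (div_le_iff₀ hh).1 (Int.le_ceil ((τ - s) / h))
  unfold ceilStep
  linarith

lemma ceilStep_lt_add (τ : ℝ) : ceilStep s h τ < τ + h := by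
  have := (lt_div_iff₀ hh).1 (sub_lt_iff_lt_add.2 (Int.ceil_lt_add_one ((τ - s) / h)))
  unfold ceilStep
  linarith

lemma ceilStep_mem_Ioc {τ : ℝ} {N : ℕ} (hτ : τ ∈ Ioc s (s + N * h)) :
    ceilStep s h τ ∈ Ioc s (s + N * h) := by
  have : ⌈(τ - s) / h⌉ ≤ N := Int.ceil_le.2 ((div_le_iff₀ hh).2 (by push_cast; linarith [hτ.2]))
  refine ⟨hτ.1.trans_le (le_ceilStep hh τ), ?_⟩
  unfold ceilStep
  gcongr
  exact_mod_cast this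

lemma ceilStep_eq {τ : ℝ} {k : ℕ} (hτ : τ ∈ Ioc (s + k * h) (s + (k + 1) * h)) :
    ceilStep s h τ = s + (k + 1) * h := by
  have : ⌈(τ - s) / h⌉ = k + 1 := by
    refine Int.ceil_eq_iff.2 ⟨?_, ?_⟩ <;> push_cast
    · exact (lt_div_iff₀ hh).2 (by linarith [hτ.1])
    · exact (div_le_iff₀ hh).2 (by linarith [hτ.2])
  rw [ceilStep, this]
  push_cast
  rfl

end CeilStep

lemma tendsto_ceilStep {h : ℕ → ℝ} (hpos : ∀ n, 0 < h n) (hlim : Tendsto h atTop (𝓝 0))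
    (s τ : ℝ) : Tendsto (fun n => ceilStep s (h n) τ) atTop (𝓝[≥] τ) := by
  refine tendsto_nhdsWithin_of_tendsto_nhds_of_eventually_within _ ?_
    (Eventually.of_forall fun n => le_ceilStep (hpos n) τ)
  refine tendsto_of_tendsto_of_tendsto_of_le_of_le tendsto_const_nhds ?_
    (fun n => le_ceilStep (hpos n) τ) (fun n => (ceilStep_lt_add (hpos n) τ).le)
  simpa using tendsto_const_nhds.add hlim

lemma measurable_comp_of_countable_range {α β γ : Type*} [MeasurableSpace α] [MeasurableSpace β]
    [MeasurableSingletonClass β] [MeasurableSpace γ] {m : α → β} (hm : Measurable m)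
    (hc : (range m).Countable) (f : β → γ) : Measurable (f ∘ m) := by
  have := hc.to_subtype
  exact (measurable_of_countable (f ∘ (Subtype.val : range m → β))).comp
    (hm.subtype_mk (h := mem_range_self))

section RCLL

variable {E : Type*}

theorem RightContinuousOnNonneg.isBounded_image_Icc [PseudoMetricSpace E] {f : ℝ → E}
    (hrc : RightContinuousOnNonneg f) (hll : HasLeftLimitsOnPos f) (T : ℝ) :
    Bornology.IsBounded (f '' Icc 0 T) := by
  refine isCompact_Icc.induction_on (p := fun S => Bornology.IsBounded (f '' S)) (by simp)
    (fun S S' hS h => h.subset (image_mono hS))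
    (fun S S' h h' => by simpa only [image_union] using h.union h') fun x hx => ?_
  have hright : f ⁻¹' Metric.ball (f x) 1 ∈ 𝓝[≥] x :=
    hrc x hx.1 (Metric.ball_mem_nhds _ one_pos)
  have ball_bdd : ∀ y, Bornology.IsBounded (f '' (f ⁻¹' Metric.ball y 1)) :=
    fun y => Metric.isBounded_ball.subset (image_preimage_subset _ _)
  rcases hx.1.eq_or_lt with rfl | hx0
  · exact ⟨_, nhdsWithin_mono _ Icc_subset_Ici_self hright, ball_bdd _⟩
  obtain ⟨L, hL⟩ := hll x hx0
  have hleft : f ⁻¹' Metric.ball L 1 ∈ 𝓝[<] x := hL (Metric.ball_mem_nhds _ one_pos)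
  refine ⟨f ⁻¹' Metric.ball L 1 ∪ f ⁻¹' Metric.ball (f x) 1, mem_nhdsWithin_of_mem_nhds ?_,
    by simpa only [image_union] using (ball_bdd _).union (ball_bdd _)⟩
  rw [← nhdsLT_sup_nhdsGE]
  exact ⟨mem_of_superset hleft subset_union_left, mem_of_superset hright subset_union_right⟩

theorem RightContinuousOnNonneg.aemeasurable_restrict_Ici [TopologicalSpace E]
    [TopologicalSpace.PseudoMetrizableSpace E] [MeasurableSpace E] [BorelSpace E] {f : ℝ → E}
    (hrc : RightContinuousOnNonneg f) (μ : Measure ℝ) : AEMeasurable f (μ.restrict (Ici 0)) :=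
  aemeasurable_of_tendsto_metrizable_ae atTop
    (f := fun n : ℕ => f ∘ ceilStep 0 (1 / ((n : ℝ) + 1)))
    (fun _ => (measurable_comp_of_countable_range measurable_ceilStep
      countable_range_ceilStep f).aemeasurable)
    ((ae_restrict_iff' measurableSet_Ici).2 <| ae_of_all _ fun τ hτ =>
      (hrc τ hτ).tendsto.comp (tendsto_ceilStep (fun _ => Nat.one_div_pos_of_nat)
        tendsto_one_div_add_atTop_nhds_zero_nat 0 τ))

end RCLL

section DistributionFunction

variable (ρ σ : Measure ℝ)

lemma measureReal_prod_eq_integral [SFinite ρ] [IsFiniteMeasure σ] {S : Set (ℝ × ℝ)}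
    (hS : MeasurableSet S) : (ρ.prod σ).real S = ∫ u, σ.real (Prod.mk u ⁻¹' S) ∂ρ := by
  rw [measureReal_def, Measure.prod_apply hS, ← integral_toReal
    (measurable_measure_prodMk_left hS).aemeasurable (ae_of_all _ fun _ => measure_lt_top _ _)]
  rfl

lemma measureReal_prod_eq_integral_symm [IsFiniteMeasure ρ] [SFinite σ] {S : Set (ℝ × ℝ)}
    (hS : MeasurableSet S) : (ρ.prod σ).real S = ∫ v, ρ.real ((·, v) ⁻¹' S) ∂σ := by
  rw [measureReal_def, Measure.prod_apply_symm hS, ← integral_toReal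
    (measurable_measure_prodMk_right hS).aemeasurable (ae_of_all _ fun _ => measure_lt_top _ _)]
  rfl

lemma measurable_measure_singleton [SFinite σ] : Measurable fun u => σ {u} := by
  have hS : MeasurableSet {z : ℝ × ℝ | z.1 = z.2} :=
    (isClosed_eq continuous_fst continuous_snd).measurableSet
  convert measurable_measure_prodMk_left (ν := σ) hS using 3 with u
  ext v
  simp [eq_comm]

variable [IsFiniteMeasure ρ] [IsFiniteMeasure σ]

theorem integral_measureReal_Iic_add_integral_measureReal_Iic :
    ∫ u, σ.real (Iic u) ∂ρ + ∫ v, ρ.real (Iic v) ∂σ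
      = ρ.real univ * σ.real univ + ∫ u, σ.real {u} ∂ρ := by
  have hA : MeasurableSet {z : ℝ × ℝ | z.2 ≤ z.1} :=
    (isClosed_le continuous_snd continuous_fst).measurableSet
  have hB : MeasurableSet {z : ℝ × ℝ | z.1 ≤ z.2} :=
    (isClosed_le continuous_fst continuous_snd).measurableSet
  have hunion := measureReal_union_add_inter (μ := ρ.prod σ) (s := {z | z.2 ≤ z.1}) hB
  rw [show {z : ℝ × ℝ | z.2 ≤ z.1} ∪ {z | z.1 ≤ z.2} = univ ×ˢ univ by ext z; simp [le_total],
    measureReal_prod_prod, measureReal_prod_eq_integral _ _ (hA.inter hB),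
    measureReal_prod_eq_integral _ _ hA, measureReal_prod_eq_integral_symm _ _ hB] at hunion
  have hdiag : ∀ u : ℝ, Prod.mk u ⁻¹' ({z : ℝ × ℝ | z.2 ≤ z.1} ∩ {z | z.1 ≤ z.2}) = {u} :=
    fun u => by ext v; simp [le_antisymm_iff, and_comm]
  simp only [hdiag] at hunion
  exact hunion.symm

lemma integrable_measureReal_comp {T : ℝ → Set ℝ} (hT : Measurable fun u => σ (T u)) :
    Integrable (fun u => σ.real (T u)) ρ :=
  Integrable.of_bound hT.ennreal_toReal.aestronglyMeasurable (σ.real univ) <|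
    ae_of_all _ fun _ => by
      rw [Real.norm_of_nonneg measureReal_nonneg]
      exact measureReal_mono (subset_univ _)

lemma integrable_measureReal_Iic : Integrable (fun u => σ.real (Iic u)) ρ :=
  integrable_measureReal_comp ρ σ <|
    Monotone.measurable fun _ _ h => measure_mono (Iic_subset_Iic.2 h)

lemma integrable_measureReal_singleton : Integrable (fun u => σ.real {u}) ρ :=
  integrable_measureReal_comp ρ σ (measurable_measure_singleton σ)

end DistributionFunction

section Energy

variable (p q : Measure ℝ) [IsFiniteMeasure p] [IsFiniteMeasure q]

/-- Off the countably many atoms the integrand vanishes, so the difference is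
`∑ₐ (p{a} - q{a})²`. -/
theorem integral_atom_sub_integral_atom_nonneg :
    0 ≤ ∫ v, (p.real {v} - q.real {v}) ∂p - ∫ v, (p.real {v} - q.real {v}) ∂q := by
  set f : ℝ → ℝ := fun v => p.real {v} - q.real {v}
  set A : Set ℝ := {v | 0 < p {v}} ∪ {v | 0 < q {v}}
  have hA : A.Countable := by
    refine .union ?_ ?_ <;>
    exact Measure.countable_meas_pos_of_disjoint_iUnion (fun _ => measurableSet_singleton _)
      fun _ _ h => disjoint_singleton.2 h
  have := hA.to_subtype
  have hf : ∀ v ∉ A, f v = 0 := fun v hv => by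
    simp only [A, mem_union, mem_ofPred_eq, not_or, not_lt, nonpos_iff_eq_zero] at hv
    simp [f, measureReal_def, hv.1, hv.2]
  have hasSum_atoms : ∀ (μ : Measure ℝ) [IsFiniteMeasure μ],
      HasSum (fun a : A => μ.real {(a : ℝ)} * f a) (∫ v, f v ∂μ) := fun μ _ => by
    have := hasSum_integral_iUnion (f := f) (μ := μ)
      (fun a : A => measurableSet_singleton (a : ℝ))
      (fun a b h => disjoint_singleton.2 (Subtype.coe_injective.ne h))
      ((integrable_measureReal_singleton μ p).sub
        (integrable_measureReal_singleton μ q)).integrableOn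
    simpa only [integral_singleton, smul_eq_mul, iUnion_of_singleton_coe,
      setIntegral_eq_integral_of_forall_compl_eq_zero hf] using this
  refine ((hasSum_atoms p).sub (hasSum_atoms q)).nonneg fun a => ?_
  rw [← sub_mul]
  exact mul_self_nonneg _

theorem sq_measureReal_univ_sub_le :
    (p.real univ - q.real univ) ^ 2 ≤
      2 * (∫ v, (p.real (Iic v) - q.real (Iic v)) ∂p
        - ∫ v, (p.real (Iic v) - q.real (Iic v)) ∂q) := by
  have hpp := integral_measureReal_Iic_add_integral_measureReal_Iic p p
  have hqq := integral_measureReal_Iic_add_integral_measureReal_Iic q q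
  have hpq := integral_measureReal_Iic_add_integral_measureReal_Iic p q
  have hqp := integral_measureReal_Iic_add_integral_measureReal_Iic q p
  have hjumps := integral_atom_sub_integral_atom_nonneg p q
  rw [integral_sub (integrable_measureReal_singleton p p) (integrable_measureReal_singleton p q),
    integral_sub (integrable_measureReal_singleton q p) (integrable_measureReal_singleton q q)]
    at hjumps
  rw [integral_sub (integrable_measureReal_Iic p p) (integrable_measureReal_Iic p q),
    integral_sub (integrable_measureReal_Iic q p) (integrable_measureReal_Iic q q)]
  linear_combination hjumps - hpp - hqq + hpq + hqp

end Energy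

section Interval

variable {p q : Measure ℝ} {s t : ℝ} {y : ℝ → ℝ}

lemma measureReal_restrict_Iic_of_mem_Ioc {v : ℝ} (hv : v ∈ Ioc s t) :
    (p.restrict (Ioc s t)).real (Iic v) = p.real (Ioc s v) := by
  rw [measureReal_restrict_apply measurableSet_Iic, Iic_inter_Ioc_of_le hv.2]

variable (hp : p (Ioc s t) ≠ ⊤) (hq : q (Ioc s t) ≠ ⊤)
  (hy : ∀ v ∈ Ioc s t, y v = p.real (Ioc s v) - q.real (Ioc s v))
include hp hq hy

lemma integrableOn_of_eq_measureReal_Ioc_sub {μ : Measure ℝ} (hμ : μ (Ioc s t) ≠ ⊤) :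
    IntegrableOn y (Ioc s t) μ := by
  have := isFiniteMeasure_restrict.2 hp
  have := isFiniteMeasure_restrict.2 hq
  have := isFiniteMeasure_restrict.2 hμ
  refine ((integrable_measureReal_Iic (μ.restrict (Ioc s t)) (p.restrict (Ioc s t))).sub
    (integrable_measureReal_Iic _ (q.restrict (Ioc s t)))).congr
    ((ae_restrict_iff' measurableSet_Ioc).2 (ae_of_all _ fun v hv => ?_))
  rw [hy v hv, Pi.sub_apply, measureReal_restrict_Iic_of_mem_Ioc hv,
    measureReal_restrict_Iic_of_mem_Ioc hv]

theorem sq_le_two_mul_setIntegral_sub (hst : s < t) :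
    y t ^ 2 ≤ 2 * (∫ v in Ioc s t, y v ∂p - ∫ v in Ioc s t, y v ∂q) := by
  have := isFiniteMeasure_restrict.2 hp
  have := isFiniteMeasure_restrict.2 hq
  have hF : EqOn
      (fun v => (p.restrict (Ioc s t)).real (Iic v) - (q.restrict (Ioc s t)).real (Iic v))
      y (Ioc s t) := fun v hv => by
    simp only [hy v hv, measureReal_restrict_Iic_of_mem_Ioc hv]
  have := sq_measureReal_univ_sub_le (p.restrict (Ioc s t)) (q.restrict (Ioc s t))
  rwa [measureReal_restrict_apply_univ, measureReal_restrict_apply_univ, ← hy t ⟨hst, le_rfl⟩,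
    setIntegral_congr_fun measurableSet_Ioc hF, setIntegral_congr_fun measurableSet_Ioc hF] at this

end Interval

section Coordinates

variable {d : ℕ} {μ : Measure ℝ} {S : Set ℝ} {C : ℝ}

lemma aemeasurable_coord {f : ℝ → Euc d} (hf : AEMeasurable f μ) (i : Fin d) :
    AEMeasurable (fun τ => f τ i) μ :=
  (EuclideanSpace.proj i : Euc d →L[ℝ] ℝ).continuous.measurable.comp_aemeasurable hf

variable (hS : MeasurableSet S) (hμ : μ S ≠ ⊤)
include hS hμ

lemma integrableOn_coord_of_norm_le {f : ℝ → Euc d} (hf : AEMeasurable f (μ.restrict S))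
    (hb : ∀ τ ∈ S, ‖f τ‖ ≤ C) (i : Fin d) : IntegrableOn (fun τ => f τ i) S μ :=
  have := isFiniteMeasure_restrict.2 hμ
  Integrable.of_bound (aemeasurable_coord hf i).aestronglyMeasurable C <|
    (ae_restrict_iff' hS).2 <| ae_of_all _ fun τ hτ =>
      (PiLp.norm_apply_le _ i).trans (hb τ hτ)

lemma tendsto_setIntegral_coord {F : ℕ → ℝ → Euc d} {f : ℝ → Euc d}
    (hF : ∀ n, AEMeasurable (F n) (μ.restrict S)) (hb : ∀ n, ∀ τ ∈ S, ‖F n τ‖ ≤ C)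
    (hlim : ∀ τ ∈ S, Tendsto (fun n => F n τ) atTop (𝓝 (f τ))) (i : Fin d) :
    Tendsto (fun n => ∫ τ in S, F n τ i ∂μ) atTop (𝓝 (∫ τ in S, f τ i ∂μ)) :=
  tendsto_integral_of_dominated_convergence (fun _ => C)
    (fun n => (aemeasurable_coord (hF n) i).aestronglyMeasurable) (integrableOn_const hμ)
    (fun n => (ae_restrict_iff' hS).2 <| ae_of_all _ fun τ hτ =>
      (PiLp.norm_apply_le _ i).trans (hb n τ hτ))
    ((ae_restrict_iff' hS).2 <| ae_of_all _ fun τ hτ =>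
      ((EuclideanSpace.proj i : Euc d →L[ℝ] ℝ).continuous.tendsto _).comp (hlim τ hτ))

end Coordinates

lemma setIntegral_Ioc_eq_sum {E : Type*} [NormedAddCommGroup E] [NormedSpace ℝ E]
    {μ : Measure ℝ} {a : ℕ → ℝ} (ha : Monotone a) {n : ℕ} {f : ℝ → E}
    (hf : IntegrableOn f (Ioc (a 0) (a n)) μ) :
    ∫ τ in Ioc (a 0) (a n), f τ ∂μ =
      ∑ k ∈ Finset.range n, ∫ τ in Ioc (a k) (a (k + 1)), f τ ∂μ := by
  rw [← intervalIntegral.integral_of_le (ha n.zero_le),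
    ← intervalIntegral.sum_integral_adjacent_intervals fun k hk =>
      (intervalIntegrable_iff_integrableOn_Ioc_of_le (ha k.le_succ)).2
        (hf.mono_set (Ioc_subset_Ioc (ha k.zero_le) (ha hk)))]
  exact Finset.sum_congr rfl fun k _ => intervalIntegral.integral_of_le (ha k.le_succ)

namespace BVMeasureData

variable {d : ℕ} {φ : ℝ → Euc d} (M : BVMeasureData d φ)

lemma pos_Ioc_ne_top {s : ℝ} (hs : 0 ≤ s) (i : Fin d) (t : ℝ) : M.pos i (Ioc s t) ≠ ⊤ :=
  ((measure_mono (Ioc_subset_Icc_self.trans (Icc_subset_Icc_left hs))).trans_lt (M.pos_fin i t)).ne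

lemma neg_Ioc_ne_top {s : ℝ} (hs : 0 ≤ s) (i : Fin d) (t : ℝ) : M.neg i (Ioc s t) ≠ ⊤ :=
  ((measure_mono (Ioc_subset_Icc_self.trans (Icc_subset_Icc_left hs))).trans_lt (M.neg_fin i t)).ne

theorem norm_sub_sq_le_two_mul_pairing_sub {φ' : ℝ → Euc d} (M' : BVMeasureData d φ')
    (h0 : φ 0 = φ' 0) {t : ℝ} (ht : 0 ≤ t) :
    ‖φ t - φ' t‖ ^ 2 ≤
      2 * (M.pairing (fun τ => φ τ - φ' τ) 0 t - M'.pairing (fun τ => φ τ - φ' τ) 0 t) := by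
  rcases ht.eq_or_lt with rfl | ht
  · simp [h0, pairing]
  rw [EuclideanSpace.norm_sq_eq, pairing, pairing, ← Finset.sum_sub_distrib, Finset.mul_sum]
  refine Finset.sum_le_sum fun i _ => ?_
  have hp : (M.pos i + M'.neg i) (Ioc 0 t) ≠ ⊤ := by
    simp [M.pos_Ioc_ne_top le_rfl, M'.neg_Ioc_ne_top le_rfl]
  have hq : (M.neg i + M'.pos i) (Ioc 0 t) ≠ ⊤ := by
    simp [M.neg_Ioc_ne_top le_rfl, M'.pos_Ioc_ne_top le_rfl]
  have hy : ∀ v ∈ Ioc 0 t, (φ v - φ' v) i =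
      (M.pos i + M'.neg i).real (Ioc 0 v) - (M.neg i + M'.pos i).real (Ioc 0 v) := by
    intro v hv
    have h := M.increments i 0 v le_rfl hv.1.le
    have h' := M'.increments i 0 v le_rfl hv.1.le
    rw [measureReal_add_apply (M.pos_Ioc_ne_top le_rfl i v) (M'.neg_Ioc_ne_top le_rfl i v),
      measureReal_add_apply (M.neg_Ioc_ne_top le_rfl i v) (M'.pos_Ioc_ne_top le_rfl i v),
      PiLp.sub_apply]
    have h0i : φ 0 i = φ' 0 i := by rw [h0]
    simp only [measureReal_def]
    linarith
  have hint : ∀ μ : Measure ℝ, μ (Ioc 0 t) ≠ ⊤ →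
      IntegrableOn (fun v => (φ v - φ' v) i) (Ioc 0 t) μ :=
    fun _ => integrableOn_of_eq_measureReal_Ioc_sub hp hq hy
  have key := sq_le_two_mul_setIntegral_sub hp hq hy ht
  rw [Measure.restrict_add, Measure.restrict_add,
    integral_add_measure (hint _ (M.pos_Ioc_ne_top le_rfl i t))
      (hint _ (M'.neg_Ioc_ne_top le_rfl i t)),
    integral_add_measure (hint _ (M.neg_Ioc_ne_top le_rfl i t))
      (hint _ (M'.pos_Ioc_ne_top le_rfl i t))] at key
  rw [Real.norm_eq_abs, sq_abs]
  linarith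

variable {s t : ℝ}

lemma pairing_congr {f g : ℝ → Euc d} (h : EqOn f g (Ioc s t)) :
    M.pairing f s t = M.pairing g s t := by
  refine Finset.sum_congr rfl fun i _ => ?_
  congr 1 <;> exact setIntegral_congr_fun measurableSet_Ioc fun τ hτ => by rw [h hτ]

lemma pairing_neg (f : ℝ → Euc d) : M.pairing (fun τ => -f τ) s t = -M.pairing f s t := by
  simp only [pairing, PiLp.neg_apply, integral_neg, ← Finset.sum_neg_distrib, neg_sub_neg, neg_sub]

variable {C : ℝ} (hs : 0 ≤ s)
include hs

lemma pairing_eq_sum {a : ℕ → ℝ} (ha : Monotone a) {n : ℕ} (ha0 : a 0 = s) (han : a n = t)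
    {f : ℝ → Euc d} (hf : ∀ μ : Measure ℝ, AEMeasurable f (μ.restrict (Ioc s t)))
    (hb : ∀ τ ∈ Ioc s t, ‖f τ‖ ≤ C) :
    M.pairing f s t = ∑ k ∈ Finset.range n, M.pairing f (a k) (a (k + 1)) := by
  subst ha0 han
  simp only [pairing]
  rw [Finset.sum_comm]
  refine Finset.sum_congr rfl fun i _ => ?_
  rw [setIntegral_Ioc_eq_sum ha (integrableOn_coord_of_norm_le measurableSet_Ioc
      (M.pos_Ioc_ne_top hs i _) (hf _) hb i),
    setIntegral_Ioc_eq_sum ha (integrableOn_coord_of_norm_le measurableSet_Ioc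
      (M.neg_Ioc_ne_top hs i _) (hf _) hb i), Finset.sum_sub_distrib]

lemma tendsto_pairing {F : ℕ → ℝ → Euc d} {f : ℝ → Euc d}
    (hF : ∀ n, ∀ μ : Measure ℝ, AEMeasurable (F n) (μ.restrict (Ioc s t)))
    (hb : ∀ n, ∀ τ ∈ Ioc s t, ‖F n τ‖ ≤ C)
    (hlim : ∀ τ ∈ Ioc s t, Tendsto (fun n => F n τ) atTop (𝓝 (f τ))) :
    Tendsto (fun n => M.pairing (F n) s t) atTop (𝓝 (M.pairing f s t)) :=
  tendsto_finsetSum _ fun i _ =>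
    (tendsto_setIntegral_coord measurableSet_Ioc (M.pos_Ioc_ne_top hs i t) (fun n => hF n _) hb
      hlim i).sub
    (tendsto_setIntegral_coord measurableSet_Ioc (M.neg_Ioc_ne_top hs i t) (fun n => hF n _) hb
      hlim i)

end BVMeasureData

namespace IsAssociated

variable {d : ℕ} {D : Set (Euc d)} {X φ : ℝ → Euc d} {M : BVMeasureData d φ}

lemma pairing_const_sub_nonneg (hA : IsAssociated D X φ M) {z : Euc d} (hz : z ∈ closure D)
    {s t : ℝ} (hs : 0 ≤ s) (hst : s ≤ t) : 0 ≤ M.pairing (fun τ => z - X τ) s t :=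
  hA.normal (fun _ => z) continuous_const (fun _ _ => hz) s t hs hst

lemma pairing_sub_nonneg_of_eqOn_Ioc (hA : IsAssociated D X φ M) {s t C : ℝ} (hs : 0 ≤ s)
    {a : ℕ → ℝ} (ha : Monotone a) {n : ℕ} (ha0 : a 0 = s) (han : a n = t) {g : ℝ → Euc d}
    {z : ℕ → Euc d} (hz : ∀ k, z k ∈ closure D)
    (hg : ∀ k, EqOn g (fun _ => z k) (Ioc (a k) (a (k + 1))))
    (hmeas : ∀ μ : Measure ℝ, AEMeasurable (fun τ => g τ - X τ) (μ.restrict (Ioc s t)))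
    (hb : ∀ τ ∈ Ioc s t, ‖g τ - X τ‖ ≤ C) : 0 ≤ M.pairing (fun τ => g τ - X τ) s t := by
  rw [M.pairing_eq_sum hs ha ha0 han hmeas hb]
  refine Finset.sum_nonneg fun k _ => ?_
  rw [M.pairing_congr fun τ hτ => by rw [hg k hτ]]
  exact hA.pairing_const_sub_nonneg (hz k) (hs.trans (ha0 ▸ ha k.zero_le)) (ha k.le_succ)

/-- The normal condition extends from continuous to rcll test functions `Z`: on the uniform
partition of `(s,t]` into `n + 1` pieces, `Z` sampled at right endpoints is piecewise constant,
and it converges back to `Z` by right-continuity. -/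
theorem pairing_sub_nonneg_of_rcll (hA : IsAssociated D X φ M)
    (hXrc : RightContinuousOnNonneg X) (hXll : HasLeftLimitsOnPos X) {Z : ℝ → Euc d}
    (hZrc : RightContinuousOnNonneg Z) (hZll : HasLeftLimitsOnPos Z)
    (hZ : ∀ u, 0 ≤ u → Z u ∈ closure D) {s t : ℝ} (hs : 0 ≤ s) (hst : s ≤ t) :
    0 ≤ M.pairing (fun τ => Z τ - X τ) s t := by
  rcases hst.eq_or_lt with rfl | hst
  · simp [BVMeasureData.pairing]
  have hsub : Ioc s t ⊆ Icc 0 t := Ioc_subset_Icc_self.trans (Icc_subset_Icc_left hs)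
  obtain ⟨CZ, hCZ⟩ := isBounded_iff_forall_norm_le.1 (hZrc.isBounded_image_Icc hZll t)
  obtain ⟨CX, hCX⟩ := isBounded_iff_forall_norm_le.1 (hXrc.isBounded_image_Icc hXll t)
  set h : ℕ → ℝ := fun n => (t - s) / (n + 1)
  have hh : ∀ n, 0 < h n := fun n => div_pos (sub_pos.2 hst) n.cast_add_one_pos
  have hlim : Tendsto h atTop (𝓝 0) := by
    simpa [h, Function.comp_def] using
      (tendsto_const_div_atTop_nhds_zero_nat (t - s)).comp (tendsto_add_atTop_nat 1)
  have hgrid : ∀ n : ℕ, s + (n + 1 : ℕ) * h n = t := fun n => by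
    simp only [h]
    push_cast
    field_simp
    ring
  set g : ℕ → ℝ → Euc d := fun n τ => Z (ceilStep s (h n) τ)
  have hmeas : ∀ n, ∀ μ : Measure ℝ,
      AEMeasurable (fun τ => g n τ - X τ) (μ.restrict (Ioc s t)) :=
    fun n μ => (measurable_comp_of_countable_range measurable_ceilStep countable_range_ceilStep
      Z).aemeasurable.sub ((hXrc.aemeasurable_restrict_Ici μ).mono_measure
        (Measure.restrict_mono (hsub.trans Icc_subset_Ici_self) le_rfl))
  have hbound : ∀ n, ∀ τ ∈ Ioc s t, ‖g n τ - X τ‖ ≤ CZ + CX := fun n τ hτ => by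
    have hτ' : ceilStep s (h n) τ ∈ Ioc s t :=
      hgrid n ▸ ceilStep_mem_Ioc (hh n) (by rwa [hgrid n])
    exact (norm_sub_le _ _).trans (add_le_add (hCZ _ (mem_image_of_mem _ (hsub hτ')))
      (hCX _ (mem_image_of_mem _ (hsub hτ))))
  have hg_nonneg : ∀ n, 0 ≤ M.pairing (fun τ => g n τ - X τ) s t := fun n => by
    have ha : Monotone fun k : ℕ => s + k * h n := fun k l hkl => by
      have := (hh n).le
      dsimp only
      gcongr
    refine hA.pairing_sub_nonneg_of_eqOn_Ioc hs ha (by simp) (hgrid n)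
      (z := fun k => Z (s + (k + 1 : ℕ) * h n))
      (fun k => hZ _ (le_add_of_nonneg_of_le hs (mul_nonneg k.succ.cast_nonneg (hh n).le)))
      (fun k τ hτ => ?_) (hmeas n) (hbound n)
    simp only [g, ceilStep_eq (hh n) (by simpa using hτ), Nat.cast_succ]
  exact ge_of_tendsto' (M.tendsto_pairing hs hmeas hbound fun τ hτ =>
    ((hZrc τ (hs.trans hτ.1.le)).tendsto.comp (tendsto_ceilStep hh hlim s τ)).sub
      tendsto_const_nhds) hg_nonneg

end IsAssociated

theorem skorohod_unique_general {d : ℕ} (D : Set (Euc d))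
    (w : ℝ → Euc d)
    (X X' φ φ' : ℝ → Euc d)
    (M : BVMeasureData d φ) (M' : BVMeasureData d φ')
    (hsol : IsSkorohodSolution D w X φ M) (hsol' : IsSkorohodSolution D w X' φ' M') :
    ∀ t : ℝ, 0 ≤ t → X t = X' t ∧ φ t = φ' t := by
  intro t ht
  have hdiff : ∀ τ, 0 ≤ τ → X τ - X' τ = φ τ - φ' τ := fun τ hτ => by
    rw [hsol.eqn τ hτ, hsol'.eqn τ hτ, add_sub_add_left_eq_sub]
  have hcongr : EqOn (fun τ => X τ - X' τ) (fun τ => φ τ - φ' τ) (Ioc 0 t) :=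
    fun τ hτ => hdiff τ hτ.1.le
  have henergy := M.norm_sub_sq_le_two_mul_pairing_sub M'
    (hsol.assoc.init.trans hsol'.assoc.init.symm) ht
  rw [← hdiff t ht, ← M.pairing_congr hcongr, ← M'.pairing_congr hcongr] at henergy
  have hM : 0 ≤ M.pairing (fun τ => X' τ - X τ) 0 t :=
    hsol.assoc.pairing_sub_nonneg_of_rcll hsol.rightCont hsol.leftLim hsol'.rightCont
      hsol'.leftLim hsol'.mem le_rfl ht
  have hM' : 0 ≤ M'.pairing (fun τ => X τ - X' τ) 0 t :=
    hsol'.assoc.pairing_sub_nonneg_of_rcll hsol'.rightCont hsol'.leftLim hsol.rightCont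
      hsol.leftLim hsol.mem le_rfl ht
  have hneg : M.pairing (fun τ => X τ - X' τ) 0 t = -M.pairing (fun τ => X' τ - X τ) 0 t := by
    simpa only [neg_sub] using M.pairing_neg (fun τ => X' τ - X τ)
  have hX : X t = X' t := by
    have : ‖X t - X' t‖ ^ 2 ≤ 0 := by linarith
    simpa [sub_eq_zero] using this.antisymm (sq_nonneg _)
  exact ⟨hX, add_left_cancel ((hsol.eqn t ht).symm.trans (hX ▸ hsol'.eqn t ht))⟩

/-- **Lemma 4.1.3.** The Skorohod equation `X = w + φ` for a nonempty convex open `D ⊆ ℝ^d`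
has at most one solution: any two solutions agree (with the same reflection term) on `[0,∞)`. -/
theorem skorohod_unique {d : ℕ} (D : Set (Euc d)) (hne : D.Nonempty)
    (hconv : Convex ℝ D) (hopen : IsOpen D)
    (w : ℝ → Euc d)
    (hw_rc : RightContinuousOnNonneg w) (hw_ll : HasLeftLimitsOnPos w)
    (hw0 : w 0 ∈ closure D)
    (X X' φ φ' : ℝ → Euc d)
    (M : BVMeasureData d φ) (M' : BVMeasureData d φ')
    (hsol : IsSkorohodSolution D w X φ M) (hsol' : IsSkorohodSolution D w X' φ' M') :
    ∀ t : ℝ, 0 ≤ t → X t = X' t ∧ φ t = φ' t :=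
  skorohod_unique_general D w X X' φ φ' M M' hsol hsol'

end
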